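/- Let (X, d) be a metric space and x₀ x₁ ⋯ x_R a geodesic path in a graph G' on a point set P ⊆ X, where vertices are adjacent in G' whenever their Voronoi cells are within distance Δ. Suppose z_i and z_ℓ (with i + 1 < ℓ) are points associated to edges (x_i, x_{i+1}) and (x_ℓ, x_{ℓ+1}), with z_i within distance Δ/2 of the Voronoi cell V(x_i) and z_ℓ within distance Δ/2 of V(x_{ℓ+1}). If d(z_i, z_ℓ) < Δ/2, then the Voronoi cells V(x_i) and V(x_{ℓ+1}) are within distance ≤ 2Δ of each other (via the cell containing the midpoint of z_i z_ℓ), contradicting geodesicity; hence d(z_i, z_ℓ) ≥ Δ/2 whenever ℓ > i + 1. -/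

import Mathlib

/-!
If two non-consecutive centers `z i`, `z ℓ` were closer than `Δ/2`, the midpoint of `z i z ℓ`
would lie in some cell that is within `Δ` of both `V (x i)` and `V (x (ℓ + 1))`. This gives a
shortcut of length at most `2` from `x i` to `x (ℓ + 1)`, against the `ℓ + 1 - i ≥ 3` steps the
geodesic spends between them.
-/

namespace SimpleGraph

theorem edist_le_of_adj_succ {V : Type*} (G : SimpleGraph V) (x : ℕ → V) {j k : ℕ} (hjk : j ≤ k)
    (hadj : ∀ i, j ≤ i → i < k → G.Adj (x i) (x (i + 1))) :
    G.edist (x j) (x k) ≤ (k - j : ℕ) := by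
  induction k, hjk using Nat.le_induction with
  | base => simp
  | succ k hjk ih =>
    calc G.edist (x j) (x (k + 1)) ≤ G.edist (x j) (x k) + G.edist (x k) (x (k + 1)) :=
          G.edist_triangle
      _ ≤ (k - j : ℕ) + 1 :=
          add_le_add (ih fun i hji hik => hadj i hji (by omega))
            (edist_eq_one_iff_adj.mpr (hadj k hjk (by omega))).le
      _ = (k + 1 - j : ℕ) := by norm_cast; omega

end SimpleGraph

section Cells

variable {X ι : Type*} {V : ι → Set X} {G : SimpleGraph ι} {Δ : ℝ}

theorem edist_le_one_of_mem_of_dist_le [Dist X]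
    (hadj : ∀ a b : ι, a ≠ b → (∃ p ∈ V a, ∃ q ∈ V b, dist p q ≤ Δ) → G.Adj a b)
    {a b : ι} {p q : X} (hp : p ∈ V a) (hq : q ∈ V b) (hpq : dist p q ≤ Δ) :
    G.edist a b ≤ 1 := by
  rw [SimpleGraph.edist_le_one_iff_adj_or_eq]
  by_cases hab : a = b
  · exact Or.inr hab
  · exact Or.inl (hadj a b hab ⟨p, hp, q, hq, hpq⟩)

theorem edist_le_two_of_near_close_points [PseudoMetricSpace X]
    (hcover : ∀ p : X, ∃ a : ι, p ∈ V a)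
    (hadj : ∀ a b : ι, a ≠ b → (∃ p ∈ V a, ∃ q ∈ V b, dist p q ≤ Δ) → G.Adj a b)
    (hmid : ∀ p q : X, ∃ m : X, dist p m = dist p q / 2 ∧ dist m q = dist p q / 2)
    {a b : ι} {p q z z' : X} (hp : p ∈ V a) (hq : q ∈ V b)
    (hpz : dist p z ≤ Δ / 2) (hqz' : dist q z' ≤ Δ / 2) (hzz' : dist z z' < Δ / 2) :
    G.edist a b ≤ 2 := by
  obtain ⟨m, hzm, hmz'⟩ := hmid z z'
  obtain ⟨c, hm⟩ := hcover m
  have hpm : dist p m ≤ Δ := by linarith [dist_triangle p z m, dist_nonneg (x := z) (y := z')]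
  have hmq : dist m q ≤ Δ := by
    linarith [dist_triangle m z' q, dist_comm q z', dist_nonneg (x := z) (y := z')]
  calc G.edist a b ≤ G.edist a c + G.edist c b := G.edist_triangle
    _ ≤ 1 + 1 := add_le_add (edist_le_one_of_mem_of_dist_le hadj hp hm hpm)
        (edist_le_one_of_mem_of_dist_le hadj hm hq hmq)
    _ = 2 := by norm_num

end Cells

theorem geodesic_centers_separated_general {X ι : Type*} [MetricSpace X] (Δ : ℝ)
    (V : ι → Set X) (hcover : ∀ p : X, ∃ a : ι, p ∈ V a)
    (G' : SimpleGraph ι)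
    (hadj : ∀ a b : ι, a ≠ b → (∃ p ∈ V a, ∃ q ∈ V b, dist p q ≤ Δ) → G'.Adj a b)
    (hmid : ∀ p q : X, ∃ m : X, dist p m = dist p q / 2 ∧ dist m q = dist p q / 2)
    (R : ℕ) (x : ℕ → ι)
    (hpath : ∀ i < R, G'.Adj (x i) (x (i + 1)))
    (hgeo : G'.dist (x 0) (x R) = R)
    (z : ℕ → X)
    (hzi : ∀ i < R, ∃ p ∈ V (x i), dist p (z i) ≤ Δ / 2)
    (hzl : ∀ i < R, ∃ q ∈ V (x (i + 1)), dist q (z i) ≤ Δ / 2) :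
    ∀ i ℓ : ℕ, i + 1 < ℓ → ℓ < R → Δ / 2 ≤ dist (z i) (z ℓ) := by
  intro i ℓ hiℓ hℓR
  by_contra! hclose
  obtain ⟨p, hp, hpz⟩ := hzi i (by omega)
  obtain ⟨q, hq, hqz⟩ := hzl ℓ hℓR
  have hsteps (j k : ℕ) (hjk : j ≤ k) (hkR : k ≤ R) : G'.edist (x j) (x k) ≤ (k - j : ℕ) :=
    G'.edist_le_of_adj_succ x hjk fun n _ hnk => hpath n (by omega)
  have hshort : G'.edist (x 0) (x R) ≤ (i + 2 + (R - (ℓ + 1)) : ℕ) := by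
    calc G'.edist (x 0) (x R)
        ≤ G'.edist (x 0) (x i) + G'.edist (x i) (x (ℓ + 1)) + G'.edist (x (ℓ + 1)) (x R) :=
          G'.edist_triangle.trans (add_le_add_left G'.edist_triangle _)
      _ ≤ (i - 0 : ℕ) + 2 + (R - (ℓ + 1) : ℕ) :=
          add_le_add (add_le_add (hsteps 0 i (by omega) (by omega))
            (edist_le_two_of_near_close_points hcover hadj hmid hp hq hpz hqz hclose))
            (hsteps (ℓ + 1) R (by omega) le_rfl)
      _ = _ := by norm_num
  have := ENat.toNat_le_of_le_natCast hshort
  rw [← SimpleGraph.dist, hgeo] at this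
  omega

/-- Separation of ball centers along a graph geodesic: if cells within distance `Δ` of each
other give adjacent vertices, the cells cover the space (which has midpoints), the path
`x₀ … x_R` is a geodesic in `G'` (each step an edge and `dist_{G'}(x₀, x_R) = R`), and each
`z_i` is within `Δ/2` of the cells of `x_i` and of `x_{i+1}`, then non-consecutive centers
satisfy `dist (z_i) (z_ℓ) ≥ Δ/2`. -/
theorem geodesic_centers_separated {X ι : Type*} [MetricSpace X] (Δ : ℝ) (hΔ : 0 < Δ)
    (V : ι → Set X) (hcover : ∀ p : X, ∃ a : ι, p ∈ V a)
    (G' : SimpleGraph ι)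
    (hadj : ∀ a b : ι, a ≠ b → (∃ p ∈ V a, ∃ q ∈ V b, dist p q ≤ Δ) → G'.Adj a b)
    (hmid : ∀ p q : X, ∃ m : X, dist p m = dist p q / 2 ∧ dist m q = dist p q / 2)
    (R : ℕ) (x : ℕ → ι)
    (hpath : ∀ i < R, G'.Adj (x i) (x (i + 1)))
    (hgeo : G'.dist (x 0) (x R) = R)
    (z : ℕ → X)
    (hzi : ∀ i < R, ∃ p ∈ V (x i), dist p (z i) ≤ Δ / 2)
    (hzl : ∀ i < R, ∃ q ∈ V (x (i + 1)), dist q (z i) ≤ Δ / 2) :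
    ∀ i ℓ : ℕ, i + 1 < ℓ → ℓ < R → Δ / 2 ≤ dist (z i) (z ℓ) :=
  geodesic_centers_separated_general Δ V hcover G' hadj hmid R x hpath hgeo z hzi hzl
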